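/- arXiv:2211.13062 — 4 statements merged into one kernel-verified Lean document; each statement's English description precedes it below -/
import Mathlib

section
/- Let α > 0 and L̃ > 0, let H̃(z) = (tanh(z + L̃/2) − tanh(z − L̃/2))/(2·tanh(L̃/2)) and g_α⁻¹(s) = (1/α)·ln((1 + s)/(1 − s)). Then for every s ∈ (−1, 1), H̃(g_α⁻¹(s)) = (e^{2L̃} − 1)·(1 − s²)^{2/α} / [ tanh(L̃/2)·((1 + s)^{2/α}·e^{L̃} + (1 − s)^{2/α})·((1 + s)^{2/α} + e^{L̃}·(1 − s)^{2/α}) ]. That is, the compactified habitat function admits this explicit closed form in the compactified coordinate s. -/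
lemma tanh_exp_form (x : ℝ) :
    Real.tanh x = (Real.exp (2 * x) - 1) / (Real.exp (2 * x) + 1) := by
  rw [Real.tanh_eq_sinh_div_cosh, Real.sinh_eq, Real.cosh_eq, Real.exp_neg, two_mul,
    Real.exp_add]
  have h1 : Real.exp x ≠ 0 := (Real.exp_pos x).ne'
  have h2 : Real.exp x * Real.exp x + 1 ≠ 0 := by positivity
  field_simp

/-- Closed form of the compactified habitat function: for `s ∈ (−1, 1)`,
`H̃(g_α⁻¹(s)) = (e^{2L̃} − 1)(1 − s²)^{2/α} /
  [tanh(L̃/2)((1+s)^{2/α} e^{L̃} + (1−s)^{2/α})((1+s)^{2/α} + e^{L̃}(1−s)^{2/α})]`. -/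
theorem compactified_habitat_closed_form (α Lt : ℝ) (hα : 0 < α) (hLt : 0 < Lt)
    (Ht : ℝ → ℝ)
    (hHt : ∀ z : ℝ,
      Ht z = (Real.tanh (z + Lt / 2) - Real.tanh (z - Lt / 2)) / (2 * Real.tanh (Lt / 2)))
    (ginv : ℝ → ℝ)
    (hginv : ∀ s : ℝ, ginv s = (1 / α) * Real.log ((1 + s) / (1 - s))) :
    ∀ s ∈ Set.Ioo (-1 : ℝ) 1,
      Ht (ginv s) =
        (Real.exp (2 * Lt) - 1) * (1 - s ^ 2) ^ (2 / α) /
          (Real.tanh (Lt / 2) *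
            ((1 + s) ^ (2 / α) * Real.exp Lt + (1 - s) ^ (2 / α)) *
            ((1 + s) ^ (2 / α) + Real.exp Lt * (1 - s) ^ (2 / α))) := by
  rintro s ⟨hs1, hs2⟩
  have h1 : (0:ℝ) < 1 + s := by linarith
  have h2 : (0:ℝ) < 1 - s := by linarith
  set A := (1 + s) ^ (2 / α) with hA
  set B := (1 - s) ^ (2 / α) with hB
  set E := Real.exp Lt with hE
  have hApos : 0 < A := Real.rpow_pos_of_pos h1 _
  have hBpos : 0 < B := Real.rpow_pos_of_pos h2 _
  have hEpos : 0 < E := Real.exp_pos _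
  have hE1 : 1 < E := by
    have := Real.add_one_le_exp Lt; rw [hE]; linarith
  have hz : Real.exp (2 * ginv s) = A / B := by
    rw [hginv, hA, hB, ← Real.div_rpow h1.le h2.le,
      Real.rpow_def_of_pos (div_pos h1 h2)]
    congr 1
    ring
  have hsq : (1 - s ^ 2) ^ (2 / α) = A * B := by
    rw [hA, hB, ← Real.mul_rpow h1.le h2.le]
    congr 1
    ring
  have hE2 : Real.exp (2 * Lt) = E * E := by
    rw [hE, two_mul, Real.exp_add]
  have htanhL : Real.tanh (Lt / 2) = (E - 1) / (E + 1) := by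
    rw [tanh_exp_form]
    congr 2 <;> rw [hE] <;> ring_nf
  have ht1 : Real.tanh (ginv s + Lt / 2) = (A / B * E - 1) / (A / B * E + 1) := by
    rw [tanh_exp_form]
    have : 2 * (ginv s + Lt / 2) = 2 * ginv s + Lt := by ring
    rw [this, Real.exp_add, hz, ← hE]
  have ht2 : Real.tanh (ginv s - Lt / 2) = (A / B / E - 1) / (A / B / E + 1) := by
    rw [tanh_exp_form]
    have : 2 * (ginv s - Lt / 2) = 2 * ginv s + -Lt := by ring
    rw [this, Real.exp_add, hz, Real.exp_neg, ← hE, div_eq_mul_inv (A/B)]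
  rw [hHt, ht1, ht2, htanhL, hsq, hE2]
  have hd1 : A / B * E + 1 ≠ 0 := by positivity
  have hd2 : A / B / E + 1 ≠ 0 := by positivity
  have hd3 : E - 1 ≠ 0 := by linarith
  have hd4 : E + 1 ≠ 0 := by positivity
  have hd5 : A * E + B ≠ 0 := by positivity
  have hd6 : A + E * B ≠ 0 := by positivity
  have hBne : B ≠ 0 := hBpos.ne'
  have hEne : E ≠ 0 := hEpos.ne'
  field_simp
  ring
end

section
/- Let α ∈ (0, 2] and L̃ > 0. Define H̃_α : [−1, 1] → ℝ by H̃_α(s) = H̃(g_α⁻¹(s)) for s ∈ (−1, 1) and H̃_α(−1) = H̃_α(1) = 0, where H̃(z) = (tanh(z + L̃/2) − tanh(z − L̃/2))/(2·tanh(L̃/2)) and g_α⁻¹(s) = (1/α)·ln((1 + s)/(1 − s)). Then H̃_α is continuously differentiable on the closed interval [−1, 1]; in particular it is continuous at s = ±1 with value 0. -/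
private lemma tanh_exp (x : ℝ) :
    Real.tanh x = (Real.exp (2*x) - 1) / (Real.exp (2*x) + 1) := by
  rw [Real.tanh_eq_sinh_div_cosh, Real.sinh_eq, Real.cosh_eq]
  have h1 : Real.exp x ≠ 0 := Real.exp_ne_zero x
  have h2 : Real.exp (2*x) = Real.exp x * Real.exp x := by
    rw [two_mul, Real.exp_add]
  have h4 : Real.exp (-x) = 1 / Real.exp x := by rw [Real.exp_neg]; field_simp
  rw [h2, h4]
  have h5 : Real.exp x * Real.exp x + 1 ≠ 0 := by positivity
  field_simp

/-- The continuously-extended compactified habitat function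
`H̃_α(s) = H̃(g_α⁻¹(s))` for `s ∈ (−1, 1)`, `H̃_α(±1) = 0`, is continuously
differentiable on the closed interval `[−1, 1]` whenever `α ∈ (0, 2]`;
in particular it is continuous at `s = ±1` with value `0`. -/
theorem compactified_habitat_C1 (α Lt : ℝ) (hα : 0 < α) (hα2 : α ≤ 2) (hLt : 0 < Lt)
    (Ht : ℝ → ℝ)
    (hHt : ∀ z : ℝ,
      Ht z = (Real.tanh (z + Lt / 2) - Real.tanh (z - Lt / 2)) / (2 * Real.tanh (Lt / 2)))
    (ginv : ℝ → ℝ)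
    (hginv : ∀ s : ℝ, ginv s = (1 / α) * Real.log ((1 + s) / (1 - s)))
    (Hα : ℝ → ℝ)
    (hHα_in : ∀ s ∈ Set.Ioo (-1 : ℝ) 1, Hα s = Ht (ginv s))
    (hHα_neg : Hα (-1) = 0) (hHα_pos : Hα 1 = 0) :
    ContDiffOn ℝ 1 Hα (Set.Icc (-1 : ℝ) 1) ∧
    ContinuousWithinAt Hα (Set.Icc (-1 : ℝ) 1) (-1) ∧
    ContinuousWithinAt Hα (Set.Icc (-1 : ℝ) 1) 1 := by
  set β : ℝ := 2 / α with hβdef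
  have hβ1 : (1 : ℝ) ≤ β := (one_le_div hα).mpr hα2
  have hβ0 : 0 < β := lt_of_lt_of_le one_pos hβ1
  set K : ℝ := Real.exp Lt with hKdef
  have hK1 : 1 < K := by rw [hKdef]; exact Real.one_lt_exp_iff.mpr hLt
  have hK0 : 0 < K := lt_trans one_pos hK1
  set A : ℝ → ℝ := fun s => (1 + s) ^ β with hA
  set B : ℝ → ℝ := fun s => (1 - s) ^ β with hB
  set F : ℝ → ℝ := fun s =>
    (A s * B s * (K + 1) ^ 2) / ((K * A s + B s) * (A s + K * B s)) with hF
  -- positivity facts on Icc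
  have hAnn : ∀ s ∈ Set.Icc (-1:ℝ) 1, 0 ≤ A s := by
    intro s hs
    exact Real.rpow_nonneg (by linarith [hs.1]) β
  have hBnn : ∀ s ∈ Set.Icc (-1:ℝ) 1, 0 ≤ B s := by
    intro s hs
    exact Real.rpow_nonneg (by linarith [hs.2]) β
  have hden : ∀ s ∈ Set.Icc (-1:ℝ) 1,
      0 < (K * A s + B s) * (A s + K * B s) := by
    intro s hs
    rcases lt_or_eq_of_le hs.1 with h | h
    · have hA0 : 0 < A s := Real.rpow_pos_of_pos (by linarith) β
      have hB0 : 0 ≤ B s := hBnn s hs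
      have : 0 < K * A s + B s := by positivity
      have : 0 < A s + K * B s := by positivity
      positivity
    · -- s = -1
      have hAeq : A s = 0 := by
        simp [hA, ← h, Real.zero_rpow (ne_of_gt hβ0)]
      have hBeq : 0 < B s := by
        have : (0:ℝ) < 1 - s := by rw [← h]; norm_num
        exact Real.rpow_pos_of_pos this β
      rw [hAeq, mul_zero, zero_add, zero_add]
      exact mul_pos hBeq (mul_pos hK0 hBeq)
  -- F is C¹ on Icc
  have hrp : ContDiff ℝ 1 (fun x : ℝ => x ^ β) := by
    have := Real.contDiff_rpow_const_of_le (p := β) (n := 1) (by exact_mod_cast hβ1)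
    simpa using this
  have hAc : ContDiff ℝ 1 A := hrp.comp (contDiff_const.add contDiff_id)
  have hBc : ContDiff ℝ 1 B := hrp.comp (contDiff_const.sub contDiff_id)
  have hFc : ContDiffOn ℝ 1 F (Set.Icc (-1:ℝ) 1) := by
    apply ContDiffOn.div
    · exact (((hAc.mul hBc).mul contDiff_const).contDiffOn)
    · exact (((contDiff_const.mul hAc).add hBc).mul
        (hAc.add (contDiff_const.mul hBc))).contDiffOn
    · intro s hs; exact ne_of_gt (hden s hs)
  -- Hα = F on Icc
  have hEq : ∀ s ∈ Set.Icc (-1:ℝ) 1, Hα s = F s := by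
    intro s hs
    rcases eq_or_lt_of_le hs.1 with h | h1
    · -- s = -1
      have hAeq : A s = 0 := by
        simp [hA, ← h, Real.zero_rpow (ne_of_gt hβ0)]
      rw [← h, hHα_neg]
      have : F (-1) = 0 := by
        have : A (-1) = 0 := by rw [← h] at hAeq; exact hAeq
        simp [hF, this]
      rw [this]
    rcases eq_or_lt_of_le hs.2 with h | h2
    · -- s = 1
      have hBeq : B s = 0 := by
        simp [hB, h, Real.zero_rpow (ne_of_gt hβ0)]
      rw [h, hHα_pos]
      have : F 1 = 0 := by
        have : B (1:ℝ) = 0 := by rw [h] at hBeq; exact hBeq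
        simp [hF, this]
      rw [this]
    -- interior
    have hs' : s ∈ Set.Ioo (-1:ℝ) 1 := ⟨h1, h2⟩
    have hp : (0:ℝ) < 1 + s := by linarith
    have hm : (0:ℝ) < 1 - s := by linarith
    have hA0 : 0 < A s := Real.rpow_pos_of_pos hp β
    have hB0 : 0 < B s := Real.rpow_pos_of_pos hm β
    set z : ℝ := ginv s with hz
    have hE : Real.exp (2 * z) = A s / B s := by
      rw [hz, hginv]
      have hu : (0:ℝ) < (1 + s) / (1 - s) := div_pos hp hm
      have : 2 * ((1 / α) * Real.log ((1 + s) / (1 - s)))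
          = Real.log ((1 + s) / (1 - s)) * β := by
        rw [hβdef]; ring
      rw [this, ← Real.rpow_def_of_pos hu, Real.div_rpow hp.le hm.le]
    have hEp : Real.exp (2 * (z + Lt / 2)) = (A s / B s) * K := by
      have : 2 * (z + Lt / 2) = 2 * z + Lt := by ring
      rw [this, Real.exp_add, hE, hKdef]
    have hEm : Real.exp (2 * (z - Lt / 2)) = (A s / B s) / K := by
      have : 2 * (z - Lt / 2) = 2 * z - Lt := by ring
      rw [this, Real.exp_sub, hE, hKdef]
    have hEc : Real.exp (2 * (Lt / 2)) = K := by
      have h2L : 2 * (Lt / 2) = Lt := by ring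
      rw [h2L, hKdef]
    rw [hHα_in s hs', hHt, tanh_exp, tanh_exp, tanh_exp, hEp, hEm, hEc, hF]
    have hd1 : (A s / B s) * K + 1 ≠ 0 := by positivity
    have hd2 : (A s / B s) / K + 1 ≠ 0 := by positivity
    have hd3 : K - 1 ≠ 0 := by linarith
    have hd4 : K + 1 ≠ 0 := by positivity
    have hd5 : (K * A s + B s) ≠ 0 := by positivity
    have hd6 : (A s + K * B s) ≠ 0 := by positivity
    have hB0' : B s ≠ 0 := ne_of_gt hB0
    have hK0' : K ≠ 0 := ne_of_gt hK0
    field_simp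
    ring
  have hHc : ContDiffOn ℝ 1 Hα (Set.Icc (-1:ℝ) 1) := hFc.congr hEq
  refine ⟨hHc, ?_, ?_⟩
  · exact (hHc.continuousOn).continuousWithinAt (by norm_num)
  · exact (hHc.continuousOn).continuousWithinAt (by norm_num)
end

section
/- Let α > 0 and L̃ > 0, let H̃(z) = (tanh(z + L̃/2) − tanh(z − L̃/2))/(2·tanh(L̃/2)) and g_α(z) = tanh(α z/2). Then the limit lim_{z→+∞} H̃′(z)/g_α′(z) exists in ℝ if and only if α ≤ 2; moreover, if α < 2 the limit equals 0, and if α = 2 the limit equals (e^{−L̃} − e^{L̃})/(2·tanh(L̃/2)). (This is the transformation condition guaranteeing C¹-smoothness of the compactified system, and it holds precisely for α ∈ (0, 2].) -/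
/-!
Write `1 / cosh² y = e^{-2y} (e^y / cosh y)²`, where `e^y / cosh y → 2` as `y → ∞`. Applied to
`H̃′` and `g_α′` this factors the quotient `H̃′/g_α′` as `e^{(α-2)z} G(z)`, where `G(z)` tends
to the nonzero constant `(e^{-L̃} - e^{L̃}) / (α tanh(L̃/2))`. Such a product converges iff
`α ≤ 2`.
-/

open Filter Topology Real

theorem Real.hasDerivAt_tanh (x : ℝ) : HasDerivAt tanh (1 / cosh x ^ 2) x := by
  have h := (hasDerivAt_sinh x).div (hasDerivAt_cosh x) (cosh_pos x).ne'
  rw [show tanh = sinh / cosh from funext tanh_eq_sinh_div_cosh]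
  exact h.congr_deriv (by rw [← sq, ← sq, cosh_sq_sub_sinh_sq])

theorem Real.one_div_cosh_sq_eq (y : ℝ) :
    1 / cosh y ^ 2 = exp (-(2 * y)) * (exp y / cosh y) ^ 2 := by
  rw [div_pow, ← mul_div_assoc, ← exp_nat_mul, ← exp_add]
  norm_num

theorem Real.exp_div_cosh_eq (y : ℝ) : exp y / cosh y = 2 / (1 + exp (-(2 * y))) := by
  have : exp (-(2 * y)) = exp (-y) / exp y := by rw [← exp_sub]; ring_nf
  rw [cosh_eq, this]
  field_simp

theorem Real.tendsto_exp_div_cosh_atTop : Tendsto (fun y ↦ exp y / cosh y) atTop (𝓝 2) := by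
  have h : Tendsto (fun y : ℝ ↦ exp (-(2 * y))) atTop (𝓝 0) :=
    tendsto_exp_atBot.comp (tendsto_neg_atTop_atBot.comp (tendsto_id.const_mul_atTop two_pos))
  have h2 := (tendsto_const_nhds (x := (2 : ℝ))).div (tendsto_const_nhds.add h)
    (by norm_num : (1 : ℝ) + 0 ≠ 0)
  rw [add_zero, div_one] at h2
  exact h2.congr fun y ↦ (exp_div_cosh_eq y).symm

theorem tendsto_exp_mul_nhds_zero_of_neg {G : ℝ → ℝ} {c β : ℝ}
    (hG : Tendsto G atTop (𝓝 c)) (hβ : β < 0) :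
    Tendsto (fun z ↦ exp (β * z) * G z) atTop (𝓝 0) := by
  simpa using (tendsto_exp_atBot.comp (tendsto_id.const_mul_atTop_of_neg hβ)).mul hG

theorem exists_tendsto_exp_mul_iff {G : ℝ → ℝ} {c β : ℝ} (hG : Tendsto G atTop (𝓝 c))
    (hc : c ≠ 0) : (∃ l, Tendsto (fun z ↦ exp (β * z) * G z) atTop (𝓝 l)) ↔ β ≤ 0 := by
  refine ⟨fun ⟨l, hl⟩ ↦ ?_, fun hβ ↦ ?_⟩
  · by_contra! hβ
    -- `G z = e^{-βz} · (e^{βz} G z)` would then tend to `0 · l = 0`.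
    have h := (tendsto_exp_mul_nhds_zero_of_neg hl (neg_lt_zero.2 hβ)).congr fun z ↦ by
      rw [← mul_assoc, ← exp_add, neg_mul, neg_add_cancel, exp_zero, one_mul]
    exact hc (tendsto_nhds_unique hG h)
  · rcases hβ.lt_or_eq with hβ | rfl
    · exact ⟨0, tendsto_exp_mul_nhds_zero_of_neg hG hβ⟩
    · exact ⟨c, by simpa using hG⟩

noncomputable def derivQuotientProfile (α L z : ℝ) : ℝ :=
  ((exp (-L) * (exp (z + L / 2) / cosh (z + L / 2)) ^ 2 -
      exp L * (exp (z - L / 2) / cosh (z - L / 2)) ^ 2) / (2 * tanh (L / 2))) /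
    ((exp (α * z / 2) / cosh (α * z / 2)) ^ 2 * (α / 2))

theorem derivQuotient_eq_exp_mul_derivQuotientProfile (α L z : ℝ) :
    (1 / cosh (z + L / 2) ^ 2 - 1 / cosh (z - L / 2) ^ 2) / (2 * tanh (L / 2)) /
        (1 / cosh (α * z / 2) ^ 2 * (α / 2)) =
      exp ((α - 2) * z) * derivQuotientProfile α L z := by
  have hplus : exp (-(2 * (z + L / 2))) = exp (-(2 * z)) * exp (-L) := by
    rw [← exp_add]; ring_nf
  have hminus : exp (-(2 * (z - L / 2))) = exp (-(2 * z)) * exp L := by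
    rw [← exp_add]; ring_nf
  have hscale : exp ((α - 2) * z) = exp (-(2 * z)) / exp (-(2 * (α * z / 2))) := by
    rw [← exp_sub]; ring_nf
  rw [one_div_cosh_sq_eq, one_div_cosh_sq_eq, one_div_cosh_sq_eq, hplus, hminus, hscale,
    derivQuotientProfile]
  ring

theorem tendsto_derivQuotientProfile {α : ℝ} (hα : 0 < α) (L : ℝ) :
    Tendsto (derivQuotientProfile α L) atTop
      (𝓝 ((exp (-L) - exp L) / (α * tanh (L / 2)))) := by
  have hplus := tendsto_exp_div_cosh_atTop.comp
    (tendsto_atTop_add_const_right _ (L / 2) tendsto_id)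
  have hminus := tendsto_exp_div_cosh_atTop.comp
    (tendsto_atTop_add_const_right _ (-(L / 2)) tendsto_id)
  have hscale := tendsto_exp_div_cosh_atTop.comp
    ((tendsto_id.const_mul_atTop hα).atTop_div_const (two_pos (α := ℝ)))
  have h := ((((tendsto_const_nhds (x := exp (-L))).mul (hplus.pow 2)).sub
    ((tendsto_const_nhds (x := exp L)).mul (hminus.pow 2))).div_const (2 * tanh (L / 2))).div
    ((hscale.pow 2).mul_const (α / 2)) (by positivity)
  convert h using 2
  · ext z
    simp [derivQuotientProfile, sub_eq_add_neg]
  · field_simp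

/-- The transformation condition for `C¹`-smoothness of the compactified system:
the limit `lim_{z→+∞} H̃′(z)/g_α′(z)` exists in `ℝ` iff `α ≤ 2`; it equals `0`
when `α < 2`, and equals `(e^{−L̃} − e^{L̃})/(2 tanh(L̃/2))` when `α = 2`. -/
theorem transformation_condition (α Lt : ℝ) (hα : 0 < α) (hLt : 0 < Lt)
    (Ht : ℝ → ℝ)
    (hHt : ∀ z : ℝ,
      Ht z = (Real.tanh (z + Lt / 2) - Real.tanh (z - Lt / 2)) / (2 * Real.tanh (Lt / 2)))
    (g : ℝ → ℝ) (hg : ∀ z : ℝ, g z = Real.tanh (α * z / 2)) :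
    ((∃ l : ℝ, Tendsto (fun z : ℝ => deriv Ht z / deriv g z) atTop (nhds l)) ↔ α ≤ 2) ∧
    (α < 2 → Tendsto (fun z : ℝ => deriv Ht z / deriv g z) atTop (nhds 0)) ∧
    (α = 2 → Tendsto (fun z : ℝ => deriv Ht z / deriv g z) atTop
      (nhds ((Real.exp (-Lt) - Real.exp Lt) / (2 * Real.tanh (Lt / 2))))) := by
  have hHt_deriv (z : ℝ) : HasDerivAt Ht
      ((1 / cosh (z + Lt / 2) ^ 2 - 1 / cosh (z - Lt / 2) ^ 2) / (2 * tanh (Lt / 2))) z := by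
    rw [show Ht = _ from funext hHt]
    exact (((hasDerivAt_tanh _).comp_add_const z _).sub
      ((hasDerivAt_tanh _).comp_sub_const z _)).div_const _
  have hg_deriv (z : ℝ) : HasDerivAt g (1 / cosh (α * z / 2) ^ 2 * (α / 2)) z := by
    rw [show g = _ from funext hg]
    exact (hasDerivAt_tanh _).comp z (by simpa using ((hasDerivAt_id z).const_mul α).div_const 2)
  have hquot : (fun z ↦ deriv Ht z / deriv g z) =
      fun z ↦ exp ((α - 2) * z) * derivQuotientProfile α Lt z := funext fun z ↦ by
    rw [(hHt_deriv z).deriv, (hg_deriv z).deriv, derivQuotient_eq_exp_mul_derivQuotientProfile]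
  have hG := tendsto_derivQuotientProfile hα Lt
  have hc : (exp (-Lt) - exp Lt) / (α * tanh (Lt / 2)) ≠ 0 := by
    have htanh : tanh (Lt / 2) ≠ 0 := by simpa using tanh_injective.ne (half_pos hLt).ne'
    exact div_ne_zero (sub_ne_zero.2 (exp_injective.ne (by linarith))) (mul_ne_zero hα.ne' htanh)
  rw [hquot]
  refine ⟨(exists_tendsto_exp_mul_iff hG hc).trans sub_nonpos,
    fun h ↦ tendsto_exp_mul_nhds_zero_of_neg hG (sub_neg.2 h), ?_⟩
  rintro rfl
  simpa using hG
end

section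
/- Let β̃ > 0, c̃ ∈ ℝ, α ∈ (0, 2] and L̃ > 0, and let F(𝒰, 𝒱, s) = (𝒱, −c̃𝒱 − f̃_A(𝒰, H̃_α(s)), (α/2)(1 − s²)) be the compactified Allee vector field on ℝ² × [−1, 1], where f̃_A(𝒰, h) = −β̃²𝒰 + 4β̃h𝒰² − 𝒰³. Then F is differentiable (within ℝ² × [−1, 1]) at the equilibria p̃⁻ = (0, 0, −1) and p̃⁺ = (0, 0, 1), its derivative at p̃⁻ is the linear map with matrix [[0, 1, 0], [β̃², −c̃, 0], [0, 0, α]], and its derivative at p̃⁺ is the linear map with matrix [[0, 1, 0], [β̃², −c̃, 0], [0, 0, −α]]. -/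
/-!
The only non-polynomial term of the field is `4 β̃ H̃_α(s) 𝒰²`. Because `|tanh| < 1`, `H̃_α` is
bounded on `[-1, 1]`, so this term is `O(𝒰²)` and contributes nothing to the derivative at points
with `𝒰 = 0`; the polynomial remainder is differentiated directly.
-/

open Set Asymptotics Topology

theorem Real.abs_tanh_sub_tanh_le_two (x y : ℝ) : |Real.tanh x - Real.tanh y| ≤ 2 :=
  (abs_sub _ _).trans <| by linarith [Real.abs_tanh_lt_one x, Real.abs_tanh_lt_one y]

theorem HasFDerivWithinAt.sq_mul_of_isBigO_one {𝕜 E : Type*} [NontriviallyNormedField 𝕜]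
    [NormedAddCommGroup E] [NormedSpace 𝕜 E] {φ h : E → 𝕜} {φ' : E →L[𝕜] 𝕜} {s : Set E} {x : E}
    (hφ : HasFDerivWithinAt φ φ' s x) (hφx : φ x = 0) (hh : h =O[𝓝[s] x] fun _ => (1 : ℝ)) :
    HasFDerivWithinAt (fun p => φ p ^ 2 * h p) (0 : E →L[𝕜] 𝕜) s x := by
  have hφO : φ =O[𝓝[s] x] (· - x) := by simpa [hφx] using hφ.isBigO_sub
  have hsq : (fun p => φ p ^ 2 * h p) =O[𝓝[s] x] fun p => ‖p - x‖ ^ 2 := by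
    simpa using (hφO.norm_right.pow 2).mul hh
  refine .of_isLittleO ?_
  simpa [hφx] using
    hsq.trans_isLittleO ((isLittleO_pow_sub_sub x one_lt_two).mono nhdsWithin_le_nhds)

noncomputable def alleeField (β c α : ℝ) (H : ℝ → ℝ) (p : ℝ × ℝ × ℝ) : ℝ × ℝ × ℝ :=
  (p.2.1, -c * p.2.1 - (-β ^ 2 * p.1 + 4 * β * H p.2.2 * p.1 ^ 2 - p.1 ^ 3),
    α / 2 * (1 - p.2.2 ^ 2))

theorem hasFDerivWithinAt_alleeField (β c α : ℝ) {H : ℝ → ℝ} {M : ℝ}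
    (hH : ∀ s ∈ Icc (-1 : ℝ) 1, |H s| ≤ M) (w₀ : ℝ) :
    ∃ A : (ℝ × ℝ × ℝ) →L[ℝ] ℝ × ℝ × ℝ,
      HasFDerivWithinAt (alleeField β c α H) A (univ ×ˢ univ ×ˢ Icc (-1) 1) (0, 0, w₀) ∧
      ∀ u v w : ℝ, A (u, v, w) = (v, β ^ 2 * u - c * v, -α * w₀ * w) := by
  set S : Set (ℝ × ℝ × ℝ) := univ ×ˢ univ ×ˢ Icc (-1) 1
  set p₀ : ℝ × ℝ × ℝ := (0, 0, w₀)
  have hu := hasFDerivAt_fst (𝕜 := ℝ) (p := p₀)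
  have hv := (hasFDerivAt_snd (𝕜 := ℝ) (p := p₀)).fst
  have hw := (hasFDerivAt_snd (𝕜 := ℝ) (p := p₀)).snd
  have hHO : (fun p : ℝ × ℝ × ℝ => H p.2.2) =O[𝓝[S] p₀] fun _ => (1 : ℝ) :=
    .of_bound M <| eventually_nhdsWithin_of_forall fun p hp => by simpa using hH _ hp.2.2
  have hnonsmooth := hu.hasFDerivWithinAt.sq_mul_of_isBigO_one (s := S) rfl hHO
  have h₂ := (((hu.const_mul (β ^ 2)).sub (hv.const_mul c)).add (hu.pow 3)).hasFDerivWithinAt.sub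
    (hnonsmooth.const_mul (4 * β))
  have h₃ := ((hw.pow 2).const_sub 1).const_mul (α / 2)
  have hsplit : ∀ p, alleeField β c α H p = (p.2.1,
      β ^ 2 * p.1 - c * p.2.1 + p.1 ^ 3 - 4 * β * (p.1 ^ 2 * H p.2.2), α / 2 * (1 - p.2.2 ^ 2)) :=
    fun p => by simp only [alleeField]; congr 2; ring
  refine ⟨_, (hv.hasFDerivWithinAt.prodMk (h₂.prodMk h₃.hasFDerivWithinAt)).congr
    (fun p _ => hsplit p) (hsplit p₀), fun u v w => ?_⟩
  simp [p₀]
  ring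

theorem compactified_allee_jacobian_general (βt ct α Lt : ℝ)
    (Ht : ℝ → ℝ)
    (hHt : ∀ z : ℝ,
      Ht z = (Real.tanh (z + Lt / 2) - Real.tanh (z - Lt / 2)) / (2 * Real.tanh (Lt / 2)))
    (Hα : ℝ → ℝ)
    (hHα_in : ∀ s ∈ Set.Ioo (-1 : ℝ) 1,
      Hα s = Ht ((1 / α) * Real.log ((1 + s) / (1 - s))))
    (hHα_neg : Hα (-1) = 0) (hHα_pos : Hα 1 = 0)
    (fA : ℝ → ℝ → ℝ)
    (hfA : ∀ u h : ℝ, fA u h = -βt ^ 2 * u + 4 * βt * h * u ^ 2 - u ^ 3)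
    (F : ℝ × ℝ × ℝ → ℝ × ℝ × ℝ)
    (hF : ∀ p : ℝ × ℝ × ℝ,
      F p = (p.2.1, -ct * p.2.1 - fA p.1 (Hα p.2.2), (α / 2) * (1 - p.2.2 ^ 2))) :
    (∃ A : (ℝ × ℝ × ℝ) →L[ℝ] (ℝ × ℝ × ℝ),
      HasFDerivWithinAt F A
        (Set.univ ×ˢ Set.univ ×ˢ Set.Icc (-1 : ℝ) 1) ((0 : ℝ), (0 : ℝ), (-1 : ℝ)) ∧
      ∀ u v w : ℝ, A (u, v, w) = (v, βt ^ 2 * u - ct * v, α * w)) ∧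
    (∃ B : (ℝ × ℝ × ℝ) →L[ℝ] (ℝ × ℝ × ℝ),
      HasFDerivWithinAt F B
        (Set.univ ×ˢ Set.univ ×ˢ Set.Icc (-1 : ℝ) 1) ((0 : ℝ), (0 : ℝ), (1 : ℝ)) ∧
      ∀ u v w : ℝ, B (u, v, w) = (v, βt ^ 2 * u - ct * v, -α * w)) := by
  have hbound : ∀ s ∈ Icc (-1 : ℝ) 1, |Hα s| ≤ 2 / |2 * Real.tanh (Lt / 2)| := by
    intro s hs
    rcases hs.1.eq_or_lt with rfl | h₁
    · rw [hHα_neg, abs_zero]; positivity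
    rcases hs.2.eq_or_lt with rfl | h₂
    · rw [hHα_pos, abs_zero]; positivity
    rw [hHα_in s ⟨h₁, h₂⟩, hHt, abs_div]
    gcongr
    exact Real.abs_tanh_sub_tanh_le_two _ _
  have hF_eq : F = alleeField βt ct α Hα := funext fun p => by rw [hF, hfA]; rfl
  subst hF_eq
  obtain ⟨A, hA, hA_apply⟩ := hasFDerivWithinAt_alleeField βt ct α hbound (-1)
  obtain ⟨B, hB, hB_apply⟩ := hasFDerivWithinAt_alleeField βt ct α hbound 1
  exact ⟨⟨A, hA, fun u v w => by simp [hA_apply]⟩, ⟨B, hB, fun u v w => by simp [hB_apply]⟩⟩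

/-- The compactified Allee vector field is differentiable (within `ℝ² × [−1, 1]`)
at the equilibria `p̃⁻ = (0,0,−1)` and `p̃⁺ = (0,0,1)`, with derivatives given by the
linear maps with matrices `[[0,1,0],[β̃²,−c̃,0],[0,0,α]]` and
`[[0,1,0],[β̃²,−c̃,0],[0,0,−α]]`, respectively. -/
theorem compactified_allee_jacobian (βt ct α Lt : ℝ) (hβt : 0 < βt)
    (hα : 0 < α) (hα2 : α ≤ 2) (hLt : 0 < Lt)
    (Ht : ℝ → ℝ)
    (hHt : ∀ z : ℝ,
      Ht z = (Real.tanh (z + Lt / 2) - Real.tanh (z - Lt / 2)) / (2 * Real.tanh (Lt / 2)))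
    (Hα : ℝ → ℝ)
    (hHα_in : ∀ s ∈ Set.Ioo (-1 : ℝ) 1,
      Hα s = Ht ((1 / α) * Real.log ((1 + s) / (1 - s))))
    (hHα_neg : Hα (-1) = 0) (hHα_pos : Hα 1 = 0)
    (fA : ℝ → ℝ → ℝ)
    (hfA : ∀ u h : ℝ, fA u h = -βt ^ 2 * u + 4 * βt * h * u ^ 2 - u ^ 3)
    (F : ℝ × ℝ × ℝ → ℝ × ℝ × ℝ)
    (hF : ∀ p : ℝ × ℝ × ℝ,
      F p = (p.2.1, -ct * p.2.1 - fA p.1 (Hα p.2.2), (α / 2) * (1 - p.2.2 ^ 2))) :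
    (∃ A : (ℝ × ℝ × ℝ) →L[ℝ] (ℝ × ℝ × ℝ),
      HasFDerivWithinAt F A
        (Set.univ ×ˢ Set.univ ×ˢ Set.Icc (-1 : ℝ) 1) ((0 : ℝ), (0 : ℝ), (-1 : ℝ)) ∧
      ∀ u v w : ℝ, A (u, v, w) = (v, βt ^ 2 * u - ct * v, α * w)) ∧
    (∃ B : (ℝ × ℝ × ℝ) →L[ℝ] (ℝ × ℝ × ℝ),
      HasFDerivWithinAt F B
        (Set.univ ×ˢ Set.univ ×ˢ Set.Icc (-1 : ℝ) 1) ((0 : ℝ), (0 : ℝ), (1 : ℝ)) ∧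
      ∀ u v w : ℝ, B (u, v, w) = (v, βt ^ 2 * u - ct * v, -α * w)) :=
  compactified_allee_jacobian_general βt ct α Lt Ht hHt Hα hHα_in hHα_neg hHα_pos fA hfA F hF
end
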